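/- Let n ≥ 2 and let (Φ1, Φ2) be a positive commuting pair of traceless matrices in Matₙ(ℂ) with Φ1 principal nilpotent. Let sl denote the space of traceless matrices in Matₙ(ℂ). Then sl × sl is the internal direct sum of the four subspaces V₁ = {(⁅Φ1, X⁆, ⁅Φ2, X⁆) : X ∈ sl}, V₂ = {(⁅Φ2ᴴ, Y⁆, ⁅Φ1ᴴ, Y⁆) : Y ∈ sl}, V₃ = {(0, C) : C ∈ sl, ⁅Φ1, C⁆ = 0 and ⁅Φ2, C⁆ = 0}, and V₄ = {(D, 0) : D ∈ sl, ⁅Φ1ᴴ, D⁆ = 0 and ⁅Φ2ᴴ, D⁆ = 0}; that is, every pair (a, b) of traceless matrices has a unique decomposition as a sum of elements of V₁, V₂, V₃, V₄. -/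

import Mathlib

open Matrix

/-- A commuting pair `(Φ1, Φ2)` of traceless matrices with `Φ1` principal nilpotent is
*positive* if `‖⁅Φ2, X⁆‖_F < ‖⁅Φ1, X⁆‖_F` whenever `⁅Φ1, X⁆ ≠ 0`; the Frobenius norms
are compared via their squares `Re tr(XᴴX)`. -/
def IsPositivePair {n : ℕ} (Φ1 Φ2 : Matrix (Fin n) (Fin n) ℂ) : Prop :=
  ∀ X : Matrix (Fin n) (Fin n) ℂ, Φ1 * X - X * Φ1 ≠ 0 →
    ((Φ2 * X - X * Φ2)ᴴ * (Φ2 * X - X * Φ2)).trace.re <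
      ((Φ1 * X - X * Φ1)ᴴ * (Φ1 * X - X * Φ1)).trace.re

/-!
Suppose `⁅Φ1, X⁆ + ⁅Φ2ᴴ, Y⁆ + D = 0` and `⁅Φ2, X⁆ + ⁅Φ1ᴴ, Y⁆ + C = 0`, where `C` commutes with
`Φ1` and `D` with `Φ1ᴴ`, and put `u = ⁅Φ1, X⁆`, `v = ⁅Φ2, X⁆`, `w = ⁅Φ1ᴴ, Y⁆`. Pairing the
relations with `u` and `w` in the Frobenius form, adjointness `⟪⁅M, X⁆, Y⟫ = ⟪X, ⁅Mᴴ, Y⁆⟫` and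
`⁅Φ1, Φ2⁆ = 0` give `‖u‖² = ‖w‖² = -Re⟪v, w⟫`, hence `‖v + w‖² = ‖v‖² - ‖u‖²`. Positivity
forces `u = 0`, and then `w = 0`. The centralizer of the principal nilpotent `Φ1` is spanned by
its powers, so it is commutative and `n`-dimensional; hence also `⁅Φ2, X⁆ = ⁅Φ2ᴴ, Y⁆ = 0`
and `C = D = 0`.
So the four subspaces, with `C` and `D` not required to be traceless, are independent in
`gl × gl`, and their dimensions `2(n² - n) + 2n` fill it. Taking traces shows `tr C = tr b`,
`tr D = tr a`, and `X`, `Y` can be made traceless by subtracting scalars.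
-/

open Module ComplexOrder

section Decomposition

variable {K M : Type*} [Field K] [AddCommGroup M] [Module K M]

theorem Submodule.existsUnique_add_add_add [FiniteDimensional K M] {V₁ V₂ V₃ V₄ : Submodule K M}
    (hind : ∀ v₁ ∈ V₁, ∀ v₂ ∈ V₂, ∀ v₃ ∈ V₃, ∀ v₄ ∈ V₄, v₁ + v₂ + v₃ + v₄ = 0 →
      v₁ = 0 ∧ v₂ = 0 ∧ v₃ = 0 ∧ v₄ = 0)
    (hdim : finrank K M ≤ finrank K V₁ + finrank K V₂ + finrank K V₃ + finrank K V₄) (z : M) :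
    ∃! x : M × M × M × M, x.1 ∈ V₁ ∧ x.2.1 ∈ V₂ ∧ x.2.2.1 ∈ V₃ ∧ x.2.2.2 ∈ V₄ ∧
      x.1 + x.2.1 + x.2.2.1 + x.2.2.2 = z := by
  let S : V₁ × V₂ × V₃ × V₄ →ₗ[K] M :=
    V₁.subtype.coprod (V₂.subtype.coprod (V₃.subtype.coprod V₄.subtype))
  have hS : Function.Injective S := by
    rw [← LinearMap.ker_eq_bot, eq_bot_iff]
    rintro ⟨⟨v₁, h₁⟩, ⟨v₂, h₂⟩, ⟨v₃, h₃⟩, ⟨v₄, h₄⟩⟩ h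
    obtain ⟨rfl, rfl, rfl, rfl⟩ := hind v₁ h₁ v₂ h₂ v₃ h₃ v₄ h₄ (by simpa [S, add_assoc] using h)
    rfl
  have hS_range : LinearMap.range S = ⊤ := by
    apply Submodule.eq_top_of_finrank_eq
    apply le_antisymm (Submodule.finrank_le _)
    rw [LinearMap.finrank_range_of_inj hS]
    simpa only [finrank_prod, add_assoc] using hdim
  obtain ⟨⟨v₁, v₂, v₃, v₄⟩, hv⟩ := hS_range ▸ Submodule.mem_top (x := z)
  refine ⟨(v₁, v₂, v₃, v₄), ⟨v₁.2, v₂.2, v₃.2, v₄.2, by simpa [S, add_assoc] using hv⟩, ?_⟩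
  rintro ⟨w₁, w₂, w₃, w₄⟩ ⟨h₁, h₂, h₃, h₄, hw⟩
  have := @hS (⟨w₁, h₁⟩, ⟨w₂, h₂⟩, ⟨w₃, h₃⟩, ⟨w₄, h₄⟩) (v₁, v₂, v₃, v₄)
    (by simp [S, add_assoc] at hv hw ⊢; rw [hv, hw])
  simp only [Prod.mk.injEq, Subtype.ext_iff] at this
  simp [this]

variable {N : Type*} [AddCommGroup N] [Module K N]

theorem Submodule.finrank_bot_prod (q : Submodule K N) :
    finrank K ((⊥ : Submodule K M).prod q) = finrank K q := by
  rw [← Submodule.map_inr]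
  exact (Submodule.equivMapOfInjective _ LinearMap.inr_injective q).finrank_eq.symm

theorem Submodule.finrank_prod_bot (p : Submodule K M) :
    finrank K (p.prod (⊥ : Submodule K N)) = finrank K p := by
  rw [← Submodule.map_inl]
  exact (Submodule.equivMapOfInjective _ LinearMap.inl_injective p).finrank_eq.symm

end Decomposition

theorem Module.End.linearIndependent_pow_apply {K V : Type*} [DivisionRing K] [AddCommGroup V]
    [Module K V] {f : Module.End K V} {v : V} {m : ℕ} (hm : (f ^ m) v ≠ 0)
    (hm' : (f ^ (m + 1)) v = 0) :
    LinearIndependent K fun k : Fin (m + 1) => (f ^ (k : ℕ)) v := by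
  induction m generalizing v with
  | zero => exact (linearIndependent_unique_iff (ι := Fin 1)).mpr (by simpa using hm)
  | succ m ih =>
    have hcons : (fun k : Fin (m + 2) => (f ^ (k : ℕ)) v) =
        Fin.cons v fun k : Fin (m + 1) => (f ^ (k : ℕ)) (f v) := by
      ext k
      refine Fin.cases (by simp) (fun k => ?_) k
      simp [pow_succ, Module.End.mul_apply]
    rw [hcons, linearIndependent_finCons]
    refine ⟨ih (by simpa [pow_succ, Module.End.mul_apply] using hm)
      (by simpa [pow_succ, Module.End.mul_apply] using hm'), fun hv => hm ?_⟩
    have hker : Submodule.span K (Set.range fun k : Fin (m + 1) => (f ^ (k : ℕ)) (f v)) ≤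
        LinearMap.ker (f ^ (m + 1)) := by
      rw [Submodule.span_le]
      rintro _ ⟨k, rfl⟩
      have : (f ^ (m + 1)) ((f ^ (k : ℕ)) (f v)) = (f ^ (k : ℕ)) ((f ^ (m + 2)) v) := by
        simp only [← Module.End.mul_apply, ← pow_succ, ← pow_add]
        ring_nf
      simp [this, hm']
    exact hker hv

noncomputable def Algebra.ad (K : Type*) {A : Type*} [CommRing K] [Ring A] [Algebra K A] (a : A) :
    A →ₗ[K] A :=
  LinearMap.mulLeft K a - LinearMap.mulRight K a

open Algebra (ad)

section ad

variable {K A : Type*} [CommRing K] [Ring A] [Algebra K A]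

theorem Algebra.ad_apply (a x : A) : ad K a x = a * x - x * a := rfl

theorem Algebra.ad_eq_zero_iff {a x : A} : ad K a x = 0 ↔ Commute a x := sub_eq_zero

theorem Algebra.ad_ad_comm {a b : A} (h : Commute a b) (x : A) :
    ad K a (ad K b x) = ad K b (ad K a x) := by
  simp only [Algebra.ad_apply, mul_sub, sub_mul, ← mul_assoc]
  rw [h.eq, mul_assoc x b a, mul_assoc x a b, h.eq]
  abel

end ad

section PrincipalNilpotent

variable {K : Type*} [Field K]

theorem Matrix.pow_card_eq_zero_of_isNilpotent {ι : Type*} [Fintype ι] [DecidableEq ι]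
    {N : Matrix ι ι K} (hN : IsNilpotent N) : N ^ Fintype.card ι = 0 := by
  have h := (isNilpotent_charpoly_sub_pow_of_isNilpotent hN).eq_zero
  rw [sub_eq_zero] at h
  simpa [h] using aeval_self_charpoly N

theorem Matrix.eq_zero_of_commute_of_mulVec_eq_zero {ι : Type*} [Fintype ι] [DecidableEq ι]
    {N X : Matrix ι ι K} {v : ι → K}
    (hv : Submodule.span K (Set.range fun k : ℕ => (N ^ k) *ᵥ v) = ⊤) (hX : Commute N X)
    (hXv : X *ᵥ v = 0) : X = 0 := by
  suffices LinearMap.ker (toLin' X) = ⊤ from toLin'.injective (by simpa using this)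
  rw [eq_top_iff, ← hv, Submodule.span_le]
  rintro _ ⟨k, rfl⟩
  rw [SetLike.mem_coe, LinearMap.mem_ker, toLin'_apply, mulVec_mulVec, ← (hX.pow_left k).eq,
    ← mulVec_mulVec, hXv, mulVec_zero]

variable {n : ℕ}

def Matrix.IsPrincipalNilpotent (N : Matrix (Fin n) (Fin n) K) : Prop :=
  IsNilpotent N ∧ N ^ (n - 1) ≠ 0

namespace Matrix.IsPrincipalNilpotent

variable {N : Matrix (Fin n) (Fin n) K} (hN : N.IsPrincipalNilpotent)
include hN

theorem pos : 0 < n := by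
  rcases Nat.eq_zero_or_pos n with rfl | h
  · exact absurd (Subsingleton.elim _ _) hN.2
  · exact h

theorem conjTranspose [StarRing K] : Nᴴ.IsPrincipalNilpotent :=
  have ⟨k, hk⟩ := hN.1
  ⟨⟨k, by rw [← conjTranspose_pow, hk, conjTranspose_zero]⟩,
    by rw [← conjTranspose_pow, Ne, conjTranspose_eq_zero]; exact hN.2⟩

theorem exists_linearIndependent_pow_mulVec :
    ∃ v : Fin n → K, LinearIndependent K fun k : Fin n => (N ^ (k : ℕ)) *ᵥ v := by
  obtain ⟨m, rfl⟩ : ∃ m, n = m + 1 := Nat.exists_eq_add_one.mpr hN.pos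
  obtain ⟨v, hv⟩ : ∃ v, (N ^ m) *ᵥ v ≠ 0 := by
    by_contra! h
    exact hN.2 (toLin'.injective (LinearMap.ext fun w => by simpa [-toLin'_pow] using h w))
  refine ⟨v, ?_⟩
  simp only [← toLin'_apply, toLin'_pow] at hv ⊢
  apply Module.End.linearIndependent_pow_apply hv
  have h := pow_card_eq_zero_of_isNilpotent hN.1
  rw [Fintype.card_fin] at h
  simp [← toLin'_pow, h]

theorem linearIndependent_pow : LinearIndependent K fun k : Fin n => N ^ (k : ℕ) := by
  obtain ⟨v, hv⟩ := hN.exists_linearIndependent_pow_mulVec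
  exact .of_comp ((mulVecBilin K K).flip v) hv

theorem ker_ad_eq_span_pow :
    LinearMap.ker (ad K N) = Submodule.span K (Set.range fun k : Fin n => N ^ (k : ℕ)) := by
  have hle : Submodule.span K (Set.range fun k : Fin n => N ^ (k : ℕ)) ≤
      LinearMap.ker (ad K N) := by
    rw [Submodule.span_le]
    rintro _ ⟨k, rfl⟩
    exact Algebra.ad_eq_zero_iff.mpr ((Commute.refl N).pow_right k)
  refine (Submodule.eq_of_le_of_finrank_le hle ?_).symm
  rw [finrank_span_eq_card hN.linearIndependent_pow, Fintype.card_fin]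
  -- A matrix commuting with `N` is determined by its value on a cyclic vector of `N`.
  obtain ⟨v, hv⟩ := hN.exists_linearIndependent_pow_mulVec
  have hcyc : Submodule.span K (Set.range fun k : ℕ => (N ^ k) *ᵥ v) = ⊤ := by
    refine eq_top_mono (Submodule.span_mono ?_) (hv.span_eq_top_of_card_eq_finrank' (by simp))
    rintro _ ⟨k, rfl⟩
    exact ⟨k, rfl⟩
  have hinj : Function.Injective (((mulVecBilin K K).flip v).domRestrict
      (LinearMap.ker (ad K N))) := by
    rw [← LinearMap.ker_eq_bot, eq_bot_iff]
    rintro ⟨X, hX⟩ hXv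
    exact Subtype.ext (eq_zero_of_commute_of_mulVec_eq_zero hcyc
      (Algebra.ad_eq_zero_iff.mp hX) hXv)
  simpa using LinearMap.finrank_le_finrank_of_injective hinj

theorem ker_ad_le_ker_ad {B : Matrix (Fin n) (Fin n) K} (hB : Commute N B) :
    LinearMap.ker (ad K N) ≤ LinearMap.ker (ad K B) := by
  rw [hN.ker_ad_eq_span_pow, Submodule.span_le]
  rintro _ ⟨k, rfl⟩
  exact Algebra.ad_eq_zero_iff.mpr (hB.symm.pow_right k)

theorem ker_prod_ad {B : Matrix (Fin n) (Fin n) K} (hB : Commute N B) :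
    LinearMap.ker ((ad K N).prod (ad K B)) = LinearMap.ker (ad K N) := by
  rw [LinearMap.ker_prod, inf_eq_left.mpr (hN.ker_ad_le_ker_ad hB)]

theorem finrank_ker_prod_ad {B : Matrix (Fin n) (Fin n) K} (hB : Commute N B) :
    finrank K (LinearMap.ker ((ad K N).prod (ad K B))) = n := by
  rw [hN.ker_prod_ad hB, hN.ker_ad_eq_span_pow, finrank_span_eq_card hN.linearIndependent_pow,
    Fintype.card_fin]

end Matrix.IsPrincipalNilpotent

section trace

variable {ι : Type*} [Fintype ι] [DecidableEq ι]

theorem Matrix.trace_ad (M X : Matrix ι ι K) : (ad K M X).trace = 0 := by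
  rw [Algebra.ad_apply, trace_sub, trace_mul_comm, sub_self]

theorem Matrix.mem_range_prod_ad_iff (hι : (Fintype.card ι : K) ≠ 0) {A B : Matrix ι ι K}
    {p : Matrix ι ι K × Matrix ι ι K} :
    p ∈ LinearMap.range ((ad K A).prod (ad K B)) ↔ ∃ X, X.trace = 0 ∧ p = (ad K A X, ad K B X) := by
  refine ⟨?_, fun ⟨X, _, hp⟩ => ⟨X, hp.symm⟩⟩
  rintro ⟨X, rfl⟩
  refine ⟨X - (X.trace / Fintype.card ι) • 1, ?_, ?_⟩
  · rw [trace_sub, trace_smul, trace_one, smul_eq_mul, div_mul_cancel₀ _ hι, sub_self]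
  · simp [Algebra.ad_apply, mul_sub, sub_mul]

end trace

end PrincipalNilpotent

namespace Matrix

variable {m n : Type*} [Fintype m] [Fintype n]

noncomputable def frobeniusInner (A B : Matrix m n ℂ) : ℝ := (Aᴴ * B).trace.re

theorem frobeniusInner_comm (A B : Matrix m n ℂ) : frobeniusInner A B = frobeniusInner B A := by
  rw [frobeniusInner, frobeniusInner, ← Complex.conj_re, ← Complex.star_def, ← trace_conjTranspose,
    conjTranspose_mul, conjTranspose_conjTranspose]

theorem frobeniusInner_add_right (A B C : Matrix m n ℂ) :
    frobeniusInner A (B + C) = frobeniusInner A B + frobeniusInner A C := by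
  simp [frobeniusInner, Matrix.mul_add]

theorem frobeniusInner_add_left (A B C : Matrix m n ℂ) :
    frobeniusInner (A + B) C = frobeniusInner A C + frobeniusInner B C := by
  simp [frobeniusInner, Matrix.add_mul]

theorem frobeniusInner_zero_right (A : Matrix m n ℂ) : frobeniusInner A 0 = 0 := by
  simp [frobeniusInner]

theorem frobeniusInner_self_nonneg (A : Matrix m n ℂ) : 0 ≤ frobeniusInner A A :=
  (Complex.nonneg_iff.mp (posSemidef_conjTranspose_mul_self A).trace_nonneg).1

theorem frobeniusInner_self_eq_zero {A : Matrix m n ℂ} : frobeniusInner A A = 0 ↔ A = 0 := by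
  refine ⟨fun h => trace_conjTranspose_mul_self_eq_zero_iff.mp (Complex.ext h ?_), ?_⟩
  · exact ((Complex.nonneg_iff.mp (posSemidef_conjTranspose_mul_self A).trace_nonneg).2).symm
  · rintro rfl
    exact frobeniusInner_zero_right 0

theorem frobeniusInner_ad_left [DecidableEq n] (M X Y : Matrix n n ℂ) :
    frobeniusInner (ad ℂ M X) Y = frobeniusInner X (ad ℂ Mᴴ Y) := by
  simp only [frobeniusInner, Algebra.ad_apply, conjTranspose_sub, conjTranspose_mul, sub_mul,
    mul_sub, trace_sub, Matrix.mul_assoc]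
  rw [trace_mul_comm Mᴴ, Matrix.mul_assoc]

end Matrix

namespace IsPositivePair

variable {n : ℕ} {Φ1 Φ2 : Matrix (Fin n) (Fin n) ℂ}

theorem ad_eq_zero_of_add_eq_zero (hpos : IsPositivePair Φ1 Φ2)
    (hcomm : Commute Φ1 Φ2) {X Y C D : Matrix (Fin n) (Fin n) ℂ}
    (hC : ad ℂ Φ1 C = 0) (hD : ad ℂ Φ1ᴴ D = 0)
    (h₁ : ad ℂ Φ1 X + ad ℂ Φ2ᴴ Y + D = 0) (h₂ : ad ℂ Φ2 X + ad ℂ Φ1ᴴ Y + C = 0) :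
    ad ℂ Φ1 X = 0 ∧ ad ℂ Φ1ᴴ Y = 0 := by
  set u := ad ℂ Φ1 X
  set v := ad ℂ Φ2 X
  set w := ad ℂ Φ1ᴴ Y
  have huD : frobeniusInner u D = 0 := by
    rw [frobeniusInner_ad_left, hD, frobeniusInner_zero_right]
  have hwC : frobeniusInner w C = 0 := by
    rw [frobeniusInner_ad_left, conjTranspose_conjTranspose, hC, frobeniusInner_zero_right]
  have hus : frobeniusInner u (ad ℂ Φ2ᴴ Y) = frobeniusInner v w := by
    rw [← frobeniusInner_ad_left, Algebra.ad_ad_comm hcomm.symm, frobeniusInner_ad_left]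
  have huu : frobeniusInner u u = -frobeniusInner v w := by
    have := congrArg (frobeniusInner u) h₁
    rw [frobeniusInner_add_right, frobeniusInner_add_right, hus, huD,
      frobeniusInner_zero_right] at this
    linarith
  have hww : frobeniusInner w w = -frobeniusInner v w := by
    have := congrArg (frobeniusInner w) h₂
    rw [frobeniusInner_add_right, frobeniusInner_add_right, hwC, frobeniusInner_comm w v,
      frobeniusInner_zero_right] at this
    linarith
  have hvw : 0 ≤ frobeniusInner v v - frobeniusInner u u := by
    have := frobeniusInner_self_nonneg (v + w)
    rw [frobeniusInner_add_left, frobeniusInner_add_right, frobeniusInner_add_right,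
      frobeniusInner_comm w v] at this
    linarith
  have hu : u = 0 := by
    by_contra hu
    have : frobeniusInner v v < frobeniusInner u u := hpos X hu
    linarith
  refine ⟨hu, frobeniusInner_self_eq_zero.mp ?_⟩
  rw [hww, ← huu, hu, frobeniusInner_zero_right]

variable (hpos : IsPositivePair Φ1 Φ2) (hN : Φ1.IsPrincipalNilpotent) (hcomm : Commute Φ1 Φ2)
include hpos hN hcomm

theorem existsUnique_decomposition (z : Matrix (Fin n) (Fin n) ℂ × Matrix (Fin n) (Fin n) ℂ) :
    ∃! x : (Matrix (Fin n) (Fin n) ℂ × Matrix (Fin n) (Fin n) ℂ) ×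
        (Matrix (Fin n) (Fin n) ℂ × Matrix (Fin n) (Fin n) ℂ) ×
        (Matrix (Fin n) (Fin n) ℂ × Matrix (Fin n) (Fin n) ℂ) ×
        (Matrix (Fin n) (Fin n) ℂ × Matrix (Fin n) (Fin n) ℂ),
      x.1 ∈ LinearMap.range ((ad ℂ Φ1).prod (ad ℂ Φ2)) ∧
      x.2.1 ∈ LinearMap.range ((ad ℂ Φ2ᴴ).prod (ad ℂ Φ1ᴴ)) ∧
      x.2.2.1 ∈ (⊥ : Submodule ℂ _).prod (LinearMap.ker ((ad ℂ Φ1).prod (ad ℂ Φ2))) ∧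
      x.2.2.2 ∈ (LinearMap.ker ((ad ℂ Φ1ᴴ).prod (ad ℂ Φ2ᴴ))).prod ⊥ ∧
      x.1 + x.2.1 + x.2.2.1 + x.2.2.2 = z := by
  have hcomm' : Commute Φ1ᴴ Φ2ᴴ := hcomm.star_star
  apply Submodule.existsUnique_add_add_add
  · rintro _ ⟨X, rfl⟩ _ ⟨Y, rfl⟩ ⟨C₀, C⟩ hC ⟨D, D₀⟩ hD hsum
    simp only [Submodule.mem_prod, Submodule.mem_bot, LinearMap.mem_ker, LinearMap.prod_apply,
      Function.prod_apply, Prod.mk_eq_zero] at hC hD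
    obtain ⟨rfl, hC, -⟩ := hC
    obtain ⟨⟨hD, -⟩, rfl⟩ := hD
    simp only [LinearMap.prod_apply, Function.prod_apply, Prod.mk_add_mk, Prod.mk_eq_zero,
      add_zero] at hsum
    obtain ⟨hX, hY⟩ := hpos.ad_eq_zero_of_add_eq_zero hcomm hC hD hsum.1 hsum.2
    have hX' : ad ℂ Φ2 X = 0 := hN.ker_ad_le_ker_ad hcomm hX
    have hY' : ad ℂ Φ2ᴴ Y = 0 := hN.conjTranspose.ker_ad_le_ker_ad hcomm' hY
    simp_all
  · have h₁ := ((ad ℂ Φ1).prod (ad ℂ Φ2)).finrank_range_add_finrank_ker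
    have h₂ := ((ad ℂ Φ2ᴴ).prod (ad ℂ Φ1ᴴ)).finrank_range_add_finrank_ker
    rw [LinearMap.ker_prod, inf_comm, ← LinearMap.ker_prod] at h₂
    simp only [finrank_prod, finrank_matrix, Submodule.finrank_bot_prod, Submodule.finrank_prod_bot,
      hN.finrank_ker_prod_ad hcomm, hN.conjTranspose.finrank_ker_prod_ad hcomm', Fintype.card_fin,
      finrank_self, mul_one] at h₁ h₂ ⊢
    linarith

end IsPositivePair

theorem positive_pair_four_fold_decomposition_general
    (n : ℕ) (Φ1 Φ2 : Matrix (Fin n) (Fin n) ℂ)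
    (hcomm : Φ1 * Φ2 = Φ2 * Φ1)
    (hpn : IsNilpotent Φ1 ∧ Φ1 ^ (n - 1) ≠ 0)
    (hpos : IsPositivePair Φ1 Φ2) :
    ∀ a b : Matrix (Fin n) (Fin n) ℂ, a.trace = 0 → b.trace = 0 →
      ∃! x : (Matrix (Fin n) (Fin n) ℂ × Matrix (Fin n) (Fin n) ℂ) ×
          (Matrix (Fin n) (Fin n) ℂ × Matrix (Fin n) (Fin n) ℂ) ×
          (Matrix (Fin n) (Fin n) ℂ × Matrix (Fin n) (Fin n) ℂ) ×
          (Matrix (Fin n) (Fin n) ℂ × Matrix (Fin n) (Fin n) ℂ),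
        (∃ X : Matrix (Fin n) (Fin n) ℂ, X.trace = 0 ∧
            x.1 = (Φ1 * X - X * Φ1, Φ2 * X - X * Φ2)) ∧
        (∃ Y : Matrix (Fin n) (Fin n) ℂ, Y.trace = 0 ∧
            x.2.1 = (Φ2ᴴ * Y - Y * Φ2ᴴ, Φ1ᴴ * Y - Y * Φ1ᴴ)) ∧
        (x.2.2.1.1 = 0 ∧ x.2.2.1.2.trace = 0 ∧
            Φ1 * x.2.2.1.2 - x.2.2.1.2 * Φ1 = 0 ∧
            Φ2 * x.2.2.1.2 - x.2.2.1.2 * Φ2 = 0) ∧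
        (x.2.2.2.2 = 0 ∧ x.2.2.2.1.trace = 0 ∧
            Φ1ᴴ * x.2.2.2.1 - x.2.2.2.1 * Φ1ᴴ = 0 ∧
            Φ2ᴴ * x.2.2.2.1 - x.2.2.2.1 * Φ2ᴴ = 0) ∧
        x.1 + x.2.1 + x.2.2.1 + x.2.2.2 = (a, b) := by
  intro a b ha hb
  have hΦ1 : Φ1.IsPrincipalNilpotent := hpn
  have hn : (Fintype.card (Fin n) : ℂ) ≠ 0 := by simpa using hΦ1.pos.ne'
  refine (existsUnique_congr fun x => ?_).mp (hpos.existsUnique_decomposition hΦ1 hcomm (a, b))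
  obtain ⟨p, q, ⟨c₀, c⟩, ⟨d, d₀⟩⟩ := x
  simp only [← Algebra.ad_apply, mem_range_prod_ad_iff hn, Submodule.mem_prod, Submodule.mem_bot,
    LinearMap.mem_ker, LinearMap.prod_apply, Function.prod_apply, Prod.mk_eq_zero]
  constructor
  · rintro ⟨⟨X, hX, rfl⟩, ⟨Y, hY, rfl⟩, ⟨rfl, hc⟩, ⟨hd, rfl⟩, hsum⟩
    have htr := congrArg (fun z => (z.1.trace, z.2.trace)) hsum
    simp only [Prod.mk_add_mk, trace_add, trace_ad, trace_zero, ha, hb, Prod.mk.injEq] at htr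
    exact ⟨⟨X, hX, rfl⟩, ⟨Y, hY, rfl⟩, ⟨rfl, by simpa using htr.2, hc⟩,
      ⟨rfl, by simpa using htr.1, hd⟩, hsum⟩
  · rintro ⟨hp, hq, ⟨hc₀, -, hc⟩, ⟨hd₀, -, hd⟩, hsum⟩
    exact ⟨hp, hq, ⟨hc₀, hc⟩, ⟨hd, hd₀⟩, hsum⟩

/-- For a positive commuting pair `(Φ1, Φ2)` of traceless matrices with `Φ1` principal
nilpotent, `sl × sl` decomposes as the internal direct sum
`Im(ad_Φ) ⊕ Im(ad_{Φ*}) ⊕ Z(Φ)·K̄ ⊕ Z(Φ*)·K`: every pair `(a, b)` of traceless matrices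
has a unique decomposition as a sum of elements of the four subspaces. -/
theorem positive_pair_four_fold_decomposition
    (n : ℕ) (hn : 2 ≤ n) (Φ1 Φ2 : Matrix (Fin n) (Fin n) ℂ)
    (h1tr : Φ1.trace = 0) (h2tr : Φ2.trace = 0)
    (hcomm : Φ1 * Φ2 = Φ2 * Φ1)
    (hpn : IsNilpotent Φ1 ∧ Φ1 ^ (n - 1) ≠ 0)
    (hpos : IsPositivePair Φ1 Φ2) :
    ∀ a b : Matrix (Fin n) (Fin n) ℂ, a.trace = 0 → b.trace = 0 →
      ∃! x : (Matrix (Fin n) (Fin n) ℂ × Matrix (Fin n) (Fin n) ℂ) ×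
          (Matrix (Fin n) (Fin n) ℂ × Matrix (Fin n) (Fin n) ℂ) ×
          (Matrix (Fin n) (Fin n) ℂ × Matrix (Fin n) (Fin n) ℂ) ×
          (Matrix (Fin n) (Fin n) ℂ × Matrix (Fin n) (Fin n) ℂ),
        (∃ X : Matrix (Fin n) (Fin n) ℂ, X.trace = 0 ∧
            x.1 = (Φ1 * X - X * Φ1, Φ2 * X - X * Φ2)) ∧
        (∃ Y : Matrix (Fin n) (Fin n) ℂ, Y.trace = 0 ∧
            x.2.1 = (Φ2ᴴ * Y - Y * Φ2ᴴ, Φ1ᴴ * Y - Y * Φ1ᴴ)) ∧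
        (x.2.2.1.1 = 0 ∧ x.2.2.1.2.trace = 0 ∧
            Φ1 * x.2.2.1.2 - x.2.2.1.2 * Φ1 = 0 ∧
            Φ2 * x.2.2.1.2 - x.2.2.1.2 * Φ2 = 0) ∧
        (x.2.2.2.2 = 0 ∧ x.2.2.2.1.trace = 0 ∧
            Φ1ᴴ * x.2.2.2.1 - x.2.2.2.1 * Φ1ᴴ = 0 ∧
            Φ2ᴴ * x.2.2.2.1 - x.2.2.2.1 * Φ2ᴴ = 0) ∧
        x.1 + x.2.1 + x.2.2.1 + x.2.2.2 = (a, b) :=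
  positive_pair_four_fold_decomposition_general n Φ1 Φ2 hcomm hpn hpos
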